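/- arXiv:1207.6237 — 5 statements merged into one kernel-verified Lean document; each statement's English description precedes it below -/
import Mathlib

section
/- Let a and b be two distinct elements of {(1,0), (0,1), (1,1)} ⊆ ℤ₂ × ℤ₂, let x, y be in the embedded lattice ℤ × ℤ ⊆ ℤ₂ × ℤ₂, and let u, v ∈ ℤ₂ satisfy x + u·a = y + v·b. Then u and v are images of rational integers; in particular the common point x + u·a lies in the embedded lattice ℤ × ℤ. -/
theorem two_infinite_a_lines_force_lattice_point
    (a b : ℤ_[2] × ℤ_[2])
    (ha : a ∈ ({((1 : ℤ_[2]), (0 : ℤ_[2])), ((0 : ℤ_[2]), (1 : ℤ_[2])),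
        ((1 : ℤ_[2]), (1 : ℤ_[2]))} : Set (ℤ_[2] × ℤ_[2])))
    (hb : b ∈ ({((1 : ℤ_[2]), (0 : ℤ_[2])), ((0 : ℤ_[2]), (1 : ℤ_[2])),
        ((1 : ℤ_[2]), (1 : ℤ_[2]))} : Set (ℤ_[2] × ℤ_[2])))
    (hab : a ≠ b)
    (x1 x2 y1 y2 : ℤ) (u v : ℤ_[2])
    (h : ((x1 : ℤ_[2]), (x2 : ℤ_[2])) + u • a = ((y1 : ℤ_[2]), (y2 : ℤ_[2])) + v • b) :
    (∃ m : ℤ, u = (m : ℤ_[2])) ∧ (∃ m : ℤ, v = (m : ℤ_[2])) ∧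
    (∃ p q : ℤ, ((x1 : ℤ_[2]), (x2 : ℤ_[2])) + u • a = ((p : ℤ_[2]), (q : ℤ_[2]))) := by
  simp only [Set.mem_insert_iff, Set.mem_singleton_iff] at ha hb
  rcases ha with rfl | rfl | rfl <;> rcases hb with rfl | rfl | rfl <;>
    simp only [Prod.mk_add_mk, Prod.smul_mk, smul_eq_mul, mul_one, mul_zero, add_zero,
      Prod.mk.injEq] at h ⊢ <;>
    obtain ⟨h1, h2⟩ := h
  · exact absurd rfl hab
  · exact ⟨⟨y1 - x1, by push_cast; linear_combination h1⟩,
      ⟨x2 - y2, by push_cast; linear_combination -h2⟩,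
      y1, x2, ⟨by push_cast; linear_combination h1, by push_cast; ring⟩⟩
  · exact ⟨⟨y1 + x2 - y2 - x1, by push_cast; linear_combination h1 - h2⟩,
      ⟨x2 - y2, by push_cast; linear_combination -h2⟩,
      y1 + x2 - y2, x2, ⟨by push_cast; linear_combination h1 - h2, by push_cast; ring⟩⟩
  · exact ⟨⟨y2 - x2, by push_cast; linear_combination h2⟩,
      ⟨x1 - y1, by push_cast; linear_combination -h1⟩,
      x1, y2, ⟨by push_cast; ring, by push_cast; linear_combination h2⟩⟩
  · exact absurd rfl hab
  · exact ⟨⟨y2 + x1 - y1 - x2, by push_cast; linear_combination h2 - h1⟩,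
      ⟨x1 - y1, by push_cast; linear_combination -h1⟩,
      x1, y2 + x1 - y1, ⟨by push_cast; ring, by push_cast; linear_combination h2 - h1⟩⟩
  · exact ⟨⟨y2 - x2, by push_cast; linear_combination h2⟩,
      ⟨x1 + y2 - x2 - y1, by push_cast; linear_combination h2 - h1⟩,
      x1 + y2 - x2, y2, ⟨by push_cast; linear_combination h2, by push_cast; linear_combination h2⟩⟩
  · exact ⟨⟨y1 - x1, by push_cast; linear_combination h1⟩,
      ⟨x2 + y1 - x1 - y2, by push_cast; linear_combination h1 - h2⟩,
      y1, x2 + y1 - x1, ⟨by push_cast; linear_combination h1, by push_cast; linear_combination h1⟩⟩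
  · exact absurd rfl hab
end

section
/- Let x, y be in the embedded lattice ℤ × ℤ ⊆ ℤ₂ × ℤ₂ and let u, v ∈ ℤ₂ satisfy x + u·(1,2) = y + v·(2,1). Then 3u and 3v are images of rational integers; if moreover x = y, then u = 0 and v = 0. -/
theorem two_infinite_w_lines
    (x1 x2 y1 y2 : ℤ) (u v : ℤ_[2])
    (h : ((x1 : ℤ_[2]), (x2 : ℤ_[2])) + u • (((1 : ℤ_[2]), (2 : ℤ_[2])) : ℤ_[2] × ℤ_[2])
       = ((y1 : ℤ_[2]), (y2 : ℤ_[2])) + v • (((2 : ℤ_[2]), (1 : ℤ_[2])) : ℤ_[2] × ℤ_[2])) :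
    (∃ m : ℤ, 3 * u = (m : ℤ_[2])) ∧ (∃ m : ℤ, 3 * v = (m : ℤ_[2])) ∧
    ((x1 = y1 ∧ x2 = y2) → u = 0 ∧ v = 0) := by
  rw [Prod.ext_iff] at h
  obtain ⟨h1, h2⟩ := h
  simp only [Prod.fst_add, Prod.snd_add, Prod.smul_fst, Prod.smul_snd, smul_eq_mul] at h1 h2
  have hu : 3 * u = ((2 * (y2 - x2) - (y1 - x1) : ℤ) : ℤ_[2]) := by push_cast; ring_nf; linear_combination 2 * h2 - h1
  have hv : 3 * v = (((y2 - x2) - 2 * (y1 - x1) : ℤ) : ℤ_[2]) := by push_cast; ring_nf; linear_combination h2 - 2 * h1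
  refine ⟨⟨_, hu⟩, ⟨_, hv⟩, ?_⟩
  rintro ⟨rfl, rfl⟩
  have h3 : (3 : ℤ_[2]) ≠ 0 := by norm_num
  constructor
  · have := hu; simp at this
    exact this
  · have := hv; simp at this
    exact this
end

section
/- Let a ∈ {(1,0), (0,1), (1,1)} and b ∈ {(2,1), (1,2), (−1,1)} in ℤ₂ × ℤ₂, let x₁, x₂ be in the embedded lattice ℤ × ℤ ⊆ ℤ₂ × ℤ₂, and let u, v ∈ ℤ₂ satisfy x₁ + u·a = x₂ + v·b. Then u and v are images of rational integers; in particular the common point x₁ + u·a lies in the embedded lattice ℤ × ℤ. -/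
set_option linter.unusedTactic false
lemma half2 (w : ℤ_[2]) (n : ℤ) (h : 2 * w = (n : ℤ_[2])) : ∃ m : ℤ, w = (m : ℤ_[2]) := by
  have hd : ((2 : ℕ) : ℤ) ∣ n := by
    rw [← PadicInt.norm_int_lt_one_iff_dvd]
    have h2 : ‖(n : ℤ_[2])‖ = ‖(2 : ℤ_[2])‖ * ‖w‖ := by rw [← h, norm_mul]
    have hp : ‖(2 : ℤ_[2])‖ = (2 : ℝ)⁻¹ := by
      simpa using PadicInt.norm_p (p := 2)
    rw [h2, hp]
    nlinarith [PadicInt.norm_le_one w, norm_nonneg w]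
  obtain ⟨m, rfl⟩ := hd
  refine ⟨m, mul_left_cancel₀ (two_ne_zero) ?_⟩
  rw [h]; push_cast; ring

theorem infinite_a_line_and_w_line_force_lattice_point
    (a b : ℤ_[2] × ℤ_[2])
    (ha : a ∈ ({((1 : ℤ_[2]), (0 : ℤ_[2])), ((0 : ℤ_[2]), (1 : ℤ_[2])),
        ((1 : ℤ_[2]), (1 : ℤ_[2]))} : Set (ℤ_[2] × ℤ_[2])))
    (hb : b ∈ ({((2 : ℤ_[2]), (1 : ℤ_[2])), ((1 : ℤ_[2]), (2 : ℤ_[2])),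
        ((-1 : ℤ_[2]), (1 : ℤ_[2]))} : Set (ℤ_[2] × ℤ_[2])))
    (x1 x2 y1 y2 : ℤ) (u v : ℤ_[2])
    (h : ((x1 : ℤ_[2]), (x2 : ℤ_[2])) + u • a = ((y1 : ℤ_[2]), (y2 : ℤ_[2])) + v • b) :
    (∃ m : ℤ, u = (m : ℤ_[2])) ∧ (∃ m : ℤ, v = (m : ℤ_[2])) ∧
    (∃ p q : ℤ, ((x1 : ℤ_[2]), (x2 : ℤ_[2])) + u • a = ((p : ℤ_[2]), (q : ℤ_[2]))) := by
  simp only [Set.mem_insert_iff, Set.mem_singleton_iff] at ha hb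
  rcases ha with rfl | rfl | rfl <;> rcases hb with rfl | rfl | rfl <;>
    simp only [Prod.smul_mk, smul_eq_mul, Prod.mk_add_mk, Prod.mk.injEq, mul_one, mul_zero,
      mul_neg, add_zero] at h ⊢ <;> obtain ⟨h1, h2⟩ := h
  · -- a=(1,0), b=(2,1)
    have hv : v = ((x2 - y2 : ℤ) : ℤ_[2]) := by linear_combination (norm := (push_cast; ring1)) -h2
    have hu : u = ((y1 - x1 + 2*(x2 - y2) : ℤ) : ℤ_[2]) := by
      linear_combination (norm := (push_cast; ring1)) h1 - 2*h2
    exact ⟨⟨_, hu⟩, ⟨_, hv⟩, x1 + (y1 - x1 + 2*(x2 - y2)), x2,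
      by linear_combination (norm := (push_cast; ring1)) hu, by push_cast; ring_nf⟩
  · -- a=(1,0), b=(1,2)
    obtain ⟨m, hv⟩ := half2 v (x2 - y2) (by linear_combination (norm := (push_cast; ring1)) -h2)
    have hu : u = ((y1 + m - x1 : ℤ) : ℤ_[2]) := by linear_combination (norm := (push_cast; ring1)) h1 + hv
    exact ⟨⟨_, hu⟩, ⟨m, hv⟩, x1 + (y1 + m - x1), x2,
      by linear_combination (norm := (push_cast; ring1)) hu, by push_cast; ring_nf⟩
  · -- a=(1,0), b=(-1,1)
    have hv : v = ((x2 - y2 : ℤ) : ℤ_[2]) := by linear_combination (norm := (push_cast; ring1)) -h2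
    have hu : u = ((y1 - x2 + y2 - x1 : ℤ) : ℤ_[2]) := by
      linear_combination (norm := (push_cast; ring1)) h1 - hv
    exact ⟨⟨_, hu⟩, ⟨_, hv⟩, x1 + (y1 - x2 + y2 - x1), x2,
      by linear_combination (norm := (push_cast; ring1)) hu, by push_cast; ring_nf⟩
  · -- a=(0,1), b=(2,1)
    obtain ⟨m, hv⟩ := half2 v (x1 - y1) (by linear_combination (norm := (push_cast; ring1)) -h1)
    have hu : u = ((y2 + m - x2 : ℤ) : ℤ_[2]) := by linear_combination (norm := (push_cast; ring1)) h2 + hv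
    exact ⟨⟨_, hu⟩, ⟨m, hv⟩, x1, x2 + (y2 + m - x2),
      by push_cast; ring_nf, by linear_combination (norm := (push_cast; ring1)) hu⟩
  · -- a=(0,1), b=(1,2)
    have hv : v = ((x1 - y1 : ℤ) : ℤ_[2]) := by linear_combination (norm := (push_cast; ring1)) -h1
    have hu : u = ((y2 + 2*(x1 - y1) - x2 : ℤ) : ℤ_[2]) := by
      linear_combination (norm := (push_cast; ring1)) h2 + 2*hv
    exact ⟨⟨_, hu⟩, ⟨_, hv⟩, x1, x2 + (y2 + 2*(x1 - y1) - x2),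
      by push_cast; ring_nf, by linear_combination (norm := (push_cast; ring1)) hu⟩
  · -- a=(0,1), b=(-1,1)
    have hv : v = ((y1 - x1 : ℤ) : ℤ_[2]) := by linear_combination (norm := (push_cast; ring1)) h1
    have hu : u = ((y2 + (y1 - x1) - x2 : ℤ) : ℤ_[2]) := by
      linear_combination (norm := (push_cast; ring1)) h2 + hv
    exact ⟨⟨_, hu⟩, ⟨_, hv⟩, x1, x2 + (y2 + (y1 - x1) - x2),
      by push_cast; ring_nf, by linear_combination (norm := (push_cast; ring1)) hu⟩
  · -- a=(1,1), b=(2,1)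
    have hv : v = ((x1 - x2 - y1 + y2 : ℤ) : ℤ_[2]) := by
      linear_combination (norm := (push_cast; ring1)) h2 - h1
    have hu : u = ((y2 + (x1 - x2 - y1 + y2) - x2 : ℤ) : ℤ_[2]) := by
      linear_combination (norm := (push_cast; ring1)) h2 + hv
    exact ⟨⟨_, hu⟩, ⟨_, hv⟩, x1 + (y2 + (x1 - x2 - y1 + y2) - x2),
      x2 + (y2 + (x1 - x2 - y1 + y2) - x2),
      by linear_combination (norm := (push_cast; ring1)) hu, by linear_combination (norm := (push_cast; ring1)) hu⟩
  · -- a=(1,1), b=(1,2)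
    have hv : v = ((y1 - y2 - x1 + x2 : ℤ) : ℤ_[2]) := by
      linear_combination (norm := (push_cast; ring1)) h1 - h2
    have hu : u = ((y1 + (y1 - y2 - x1 + x2) - x1 : ℤ) : ℤ_[2]) := by
      linear_combination (norm := (push_cast; ring1)) h1 + hv
    exact ⟨⟨_, hu⟩, ⟨_, hv⟩, x1 + (y1 + (y1 - y2 - x1 + x2) - x1),
      x2 + (y1 + (y1 - y2 - x1 + x2) - x1),
      by linear_combination (norm := (push_cast; ring1)) hu, by linear_combination (norm := (push_cast; ring1)) hu⟩
  · -- a=(1,1), b=(-1,1)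
    obtain ⟨m, hv⟩ := half2 v (y1 - y2 - x1 + x2) (by linear_combination (norm := (push_cast; ring1)) h1 - h2)
    have hu : u = ((y1 - m - x1 : ℤ) : ℤ_[2]) := by linear_combination (norm := (push_cast; ring1)) h1 - hv
    exact ⟨⟨_, hu⟩, ⟨m, hv⟩, x1 + (y1 - m - x1), x2 + (y1 - m - x1),
      by linear_combination (norm := (push_cast; ring1)) hu, by linear_combination (norm := (push_cast; ring1)) hu⟩
end

section
/- Let μ be the Haar probability measure on the compact additive group ℤ₂ × ℤ₂. Then the set ⋃_{x ∈ ℤ×ℤ} ⋃_{c ∈ S} { x + u·c : u ∈ ℤ₂ }, where S = {(1,0), (0,1), (1,1), (2,1), (1,2), (−1,1)}, has μ-measure zero. -/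
open MeasureTheory

noncomputable instance : MeasurableSpace (ℤ_[2] × ℤ_[2]) := borel _

instance : BorelSpace (ℤ_[2] × ℤ_[2]) := ⟨rfl⟩

lemma line_closed (c : ℤ_[2] × ℤ_[2]) :
    IsClosed {p : ℤ_[2] × ℤ_[2] | ∃ u : ℤ_[2], p = u • c} := by
  have : {p : ℤ_[2] × ℤ_[2] | ∃ u : ℤ_[2], p = u • c} = Set.range (fun u : ℤ_[2] => u • c) := by
    ext p; simp [Set.mem_range, eq_comm]
  rw [this]
  exact (isCompact_range (by continuity)).isClosed

lemma line_null (μ : Measure (ℤ_[2] × ℤ_[2])) [μ.IsAddHaarMeasure] [IsProbabilityMeasure μ]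
    (c : ℤ_[2] × ℤ_[2]) (hc : IsUnit c.1 ∨ IsUnit c.2) :
    μ {p : ℤ_[2] × ℤ_[2] | ∃ u : ℤ_[2], p = u • c} = 0 := by
  set L := {p : ℤ_[2] × ℤ_[2] | ∃ u : ℤ_[2], p = u • c} with hL
  classical
  set t : ℕ → ℤ_[2] × ℤ_[2] := fun n =>
    if IsUnit c.1 then ((0 : ℤ_[2]), (n : ℤ_[2])) else ((n : ℤ_[2]), (0 : ℤ_[2])) with ht
  set S : ℕ → Set (ℤ_[2] × ℤ_[2]) := fun n => (fun p => -t n + p) ⁻¹' L with hS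
  have hmeasL : MeasurableSet L := (line_closed c).measurableSet
  have hmeas : ∀ n, MeasurableSet (S n) := fun n =>
    hmeasL.preimage (measurable_const_add _)
  have hμS : ∀ n, μ (S n) = μ L := fun n => measure_preimage_add μ _ L
  have hdisj : Pairwise (Function.onFun Disjoint S) := by
    intro m n hmn
    rw [Function.onFun, Set.disjoint_left]
    rintro p ⟨u, hu⟩ ⟨v, hv⟩
    have h : t n - t m = (u - v) • c := by
      rw [sub_smul, ← hu, ← hv]
      show t n - t m = (-t m + p) - (-t n + p)
      abel
    apply hmn
    rcases Classical.em (IsUnit c.1) with h1 | h1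
    · have ht' : ∀ k : ℕ, t k = ((0 : ℤ_[2]), (k : ℤ_[2])) := fun k => by simp [ht, h1]
      have hfst : (0 : ℤ_[2]) = (u - v) * c.1 := by
        have := congrArg Prod.fst h
        simpa [ht', Prod.smul_def, smul_eq_mul] using this
      have huv : u - v = 0 := by
        rcases h1 with ⟨w, hw⟩
        have := hfst.symm
        rw [← hw] at this
        exact (Units.mul_right_eq_zero w).mp (by rw [mul_comm] at this; exact this)
      have hsnd : (n : ℤ_[2]) - (m : ℤ_[2]) = (u - v) * c.2 := by
        have := congrArg Prod.snd h
        simpa [ht', Prod.smul_def, smul_eq_mul] using this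
      rw [huv, zero_mul, sub_eq_zero] at hsnd
      exact_mod_cast hsnd.symm
    · have h2 : IsUnit c.2 := hc.resolve_left h1
      have ht' : ∀ k : ℕ, t k = ((k : ℤ_[2]), (0 : ℤ_[2])) := fun k => by simp [ht, h1]
      have hsnd : (0 : ℤ_[2]) = (u - v) * c.2 := by
        have := congrArg Prod.snd h
        simpa [ht', Prod.smul_def, smul_eq_mul] using this
      have huv : u - v = 0 := by
        rcases h2 with ⟨w, hw⟩
        have := hsnd.symm
        rw [← hw] at this
        exact (Units.mul_right_eq_zero w).mp (by rw [mul_comm] at this; exact this)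
      have hfst : (n : ℤ_[2]) - (m : ℤ_[2]) = (u - v) * c.1 := by
        have := congrArg Prod.fst h
        simpa [ht', Prod.smul_def, smul_eq_mul] using this
      rw [huv, zero_mul, sub_eq_zero] at hfst
      exact_mod_cast hfst.symm
  by_contra hne
  have hsum : (∑' n : ℕ, μ (S n)) = μ (⋃ n, S n) := (measure_iUnion hdisj hmeas).symm
  have hle : μ (⋃ n, S n) ≤ 1 := by
    calc μ (⋃ n, S n) ≤ μ Set.univ := measure_mono (Set.subset_univ _)
    _ = 1 := measure_univ
  have htop : (∑' n : ℕ, μ (S n)) = ⊤ := by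
    simp only [hμS]
    exact ENNReal.tsum_const_eq_top_of_ne_zero hne
  rw [hsum] at htop
  rw [htop] at hle
  exact absurd hle (by simp)

lemma coset_null (μ : Measure (ℤ_[2] × ℤ_[2])) [μ.IsAddHaarMeasure] [IsProbabilityMeasure μ]
    (x c : ℤ_[2] × ℤ_[2]) (hc : IsUnit c.1 ∨ IsUnit c.2) :
    μ {p : ℤ_[2] × ℤ_[2] | ∃ u : ℤ_[2], p = x + u • c} = 0 := by
  have : {p : ℤ_[2] × ℤ_[2] | ∃ u : ℤ_[2], p = x + u • c}
      = (fun p => -x + p) ⁻¹' {p : ℤ_[2] × ℤ_[2] | ∃ u : ℤ_[2], p = u • c} := by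
    ext p
    simp only [Set.mem_setOf_eq, Set.mem_preimage]
    constructor
    · rintro ⟨u, rfl⟩; exact ⟨u, by ring⟩
    · rintro ⟨u, hu⟩; exact ⟨u, by linear_combination hu⟩
  rw [this, measure_preimage_add]
  exact line_null μ c hc

theorem singular_parameters_measure_zero
    (μ : Measure (ℤ_[2] × ℤ_[2])) [μ.IsAddHaarMeasure] [IsProbabilityMeasure μ] :
    μ (⋃ x ∈ {p : ℤ_[2] × ℤ_[2] | ∃ m n : ℤ, p = ((m : ℤ_[2]), (n : ℤ_[2]))},
       ⋃ c ∈ ({((1 : ℤ_[2]), (0 : ℤ_[2])), ((0 : ℤ_[2]), (1 : ℤ_[2])),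
          ((1 : ℤ_[2]), (1 : ℤ_[2])), ((2 : ℤ_[2]), (1 : ℤ_[2])),
          ((1 : ℤ_[2]), (2 : ℤ_[2])), ((-1 : ℤ_[2]), (1 : ℤ_[2]))} : Set (ℤ_[2] × ℤ_[2])),
       {p : ℤ_[2] × ℤ_[2] | ∃ u : ℤ_[2], p = x + u • c}) = 0 := by
  have hX : Set.Countable {p : ℤ_[2] × ℤ_[2] | ∃ m n : ℤ, p = ((m : ℤ_[2]), (n : ℤ_[2]))} := by
    have : {p : ℤ_[2] × ℤ_[2] | ∃ m n : ℤ, p = ((m : ℤ_[2]), (n : ℤ_[2]))}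
        = Set.range (fun mn : ℤ × ℤ => (((mn.1 : ℤ_[2]), (mn.2 : ℤ_[2])) : ℤ_[2] × ℤ_[2])) := by
      ext p
      constructor
      · rintro ⟨m, n, rfl⟩; exact ⟨(m, n), rfl⟩
      · rintro ⟨⟨m, n⟩, rfl⟩; exact ⟨m, n, rfl⟩
    rw [this]
    exact Set.countable_range _
  rw [measure_biUnion_null_iff hX]
  intro x _
  rw [measure_biUnion_null_iff (Set.Finite.countable (by
    apply Set.Finite.insert; apply Set.Finite.insert; apply Set.Finite.insert
    apply Set.Finite.insert; apply Set.Finite.insert; exact Set.finite_singleton _))]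
  intro c hc
  simp only [Set.mem_insert_iff, Set.mem_singleton_iff] at hc
  rcases hc with rfl | rfl | rfl | rfl | rfl | rfl
  · exact coset_null μ x _ (Or.inl isUnit_one)
  · exact coset_null μ x _ (Or.inr isUnit_one)
  · exact coset_null μ x _ (Or.inl isUnit_one)
  · exact coset_null μ x _ (Or.inr isUnit_one)
  · exact coset_null μ x _ (Or.inl isUnit_one)
  · exact coset_null μ x _ (Or.inl isUnit_one.neg)
end

section
/- Let S ⊆ ℤ₂ × ℤ₂ be a finite set and let x, q ∈ ℤ₂ × ℤ₂. Suppose that for every k ∈ ℕ there exist c ∈ S and n ∈ ℤ such that x + n·c − q ∈ 2^k·(ℤ₂ × ℤ₂). Then there exist c ∈ S and u ∈ ℤ₂ with q = x + u·c. -/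
theorem pigeonhole_infinite_level_direction
    (S : Set (ℤ_[2] × ℤ_[2])) (hS : S.Finite) (x q : ℤ_[2] × ℤ_[2])
    (h : ∀ k : ℕ, ∃ c ∈ S, ∃ n : ℤ, ∃ z : ℤ_[2] × ℤ_[2],
        x + (n : ℤ_[2]) • c - q = ((2 : ℤ_[2]) ^ k) • z) :
    ∃ c ∈ S, ∃ u : ℤ_[2], q = x + u • c := by
  classical
  -- choose a direction for each k
  choose c hcS n z hz using h
  -- pigeonhole: some direction occurs for infinitely many k
  haveI : Finite hS.toFinset := Finite.of_fintype _
  have hfib : ∃ c0 : hS.toFinset, {k : ℕ | (⟨c k, hS.mem_toFinset.2 (hcS k)⟩ : hS.toFinset) = c0}.Infinite := by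
    have := Finite.exists_infinite_fiber (fun k : ℕ => (⟨c k, hS.mem_toFinset.2 (hcS k)⟩ : hS.toFinset))
    obtain ⟨y, hy⟩ := this
    exact ⟨y, Set.infinite_coe_iff.mp hy⟩
  obtain ⟨⟨c0, hc0⟩, hK⟩ := hfib
  refine ⟨c0, hS.mem_toFinset.1 hc0, ?_⟩
  -- the compact set of points x + u • c0
  set A : Set (ℤ_[2] × ℤ_[2]) := (fun u : ℤ_[2] => x + u • c0) '' Set.univ with hA
  have hcont : Continuous (fun u : ℤ_[2] => x + u • c0) :=
    continuous_const.add (continuous_id.smul continuous_const)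
  have hAcomp : IsCompact A := isCompact_univ.image hcont
  have hAclosed : IsClosed A := hAcomp.isClosed
  have hqA : q ∈ A := by
    rw [← hAclosed.closure_eq]
    rw [Metric.mem_closure_iff]
    intro ε hε
    obtain ⟨k, hk⟩ := exists_pow_lt_of_lt_one hε (by norm_num : (1 : ℝ) / 2 < 1)
    -- find k' ≥ k in the infinite fiber
    obtain ⟨k', hk'K, hkk'⟩ := hK.exists_gt k
    refine ⟨x + (n k' : ℤ_[2]) • c0, ⟨(n k' : ℤ_[2]), Set.mem_univ _, rfl⟩, ?_⟩
    have hck' : c k' = c0 := congrArg Subtype.val hk'K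
    have hz' := hz k'
    rw [hck'] at hz'
    have hnorm : ‖x + (n k' : ℤ_[2]) • c0 - q‖ ≤ (1 / 2 : ℝ) ^ k' := by
      rw [hz']
      calc ‖((2 : ℤ_[2]) ^ k') • z k'‖ ≤ ‖(2 : ℤ_[2]) ^ k'‖ * ‖z k'‖ := norm_smul_le _ _
        _ ≤ ‖(2 : ℤ_[2]) ^ k'‖ * 1 := by
            refine mul_le_mul_of_nonneg_left ?_ (norm_nonneg _)
            rw [Prod.norm_def]
            exact max_le (PadicInt.norm_le_one _) (PadicInt.norm_le_one _)
        _ = (1 / 2 : ℝ) ^ k' := by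
            rw [mul_one]
            have h2 : ((2 : ℕ) : ℤ_[2]) = (2 : ℤ_[2]) := by norm_num
            rw [← h2, PadicInt.norm_p_pow]
            rw [zpow_neg, zpow_natCast]
            rw [one_div, inv_pow]
            push_cast
            ring
    have hlt : ((1 : ℝ) / 2) ^ k' ≤ (1 / 2 : ℝ) ^ k :=
      pow_le_pow_of_le_one (by norm_num) (by norm_num) (le_of_lt hkk')
    rw [dist_comm, dist_eq_norm]
    have : ‖x + (n k' : ℤ_[2]) • c0 - q‖ < ε := lt_of_le_of_lt (hnorm.trans hlt) hk
    exact this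
  obtain ⟨u, -, hu⟩ := hqA
  exact ⟨u, hu.symm⟩
end
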